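/- Let w be a word of length n ≥ 1 in the Farey binary tree with value p/q, and let [k_1,…,k_{q+1}] be the unreduced degree sequence of p/q. Then k_1 + k_{q+1} = n + 3; that is, the boundary degree of the Haros graph reached by a path of length n equals n + 3. -/

import Mathlib

/-- Symbols for paths in the Farey binary tree. -/
inductive LR
  | L
  | R
deriving DecidableEq

/-- One step in the Farey binary tree: update the current pair of fractions
(represented as pairs (numerator, denominator) of naturals). -/
def fareyStep : ((ℕ × ℕ) × (ℕ × ℕ)) → LR → ((ℕ × ℕ) × (ℕ × ℕ))
  | ((a, b), (c, d)), LR.L => ((a, b), (a + c, b + d))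
  | ((a, b), (c, d)), LR.R => ((a + c, b + d), (c, d))

/-- The final pair of fractions of a word: after reading the first symbol `L`
the current pair is (0/1, 1/1); the remaining symbols update it. -/
def finalPair (w : List LR) : (ℕ × ℕ) × (ℕ × ℕ) :=
  w.tail.foldl fareyStep ((0, 1), (1, 1))

/-- The value ⟨w⟩ of a word: the mediant of its final pair, as (numerator, denominator). -/
def value (w : List LR) : ℕ × ℕ :=
  ((finalPair w).1.1 + (finalPair w).2.1, (finalPair w).1.2 + (finalPair w).2.2)

/-- A word over {L,R} is a Farey word when its first symbol is `L`. -/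
def IsFareyWord (w : List LR) : Prop := w.head? = some LR.L

/-- Concatenation of degree sequences:
[a₁,…,a_s] ⊕ [b₁,…,b_t] = [a₁+1, a₂, …, a_{s−1}, a_s+b₁, b₂, …, b_{t−1}, b_t+1]. -/
def oplus (A B : List ℕ) : List ℕ :=
  (A.dropLast.modifyHead (· + 1)) ++ [A.getLastD 0 + B.headD 0] ++ B.tail.dropLast
    ++ [B.getLastD 0 + 1]

/-- Update of the pair (D(left ancestor), D(right ancestor)) of unreduced degree
sequences along one symbol. -/
def degStep : (List ℕ × List ℕ) → LR → (List ℕ × List ℕ)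
  | (A, B), LR.L => (A, oplus A B)
  | (A, B), LR.R => (oplus A B, B)

/-- The pair (D(a/b), D(c/d)) of unreduced degree sequences of the final pair of a word;
0/1 and 1/1 are both assigned the list [1,1]. -/
def degPair (w : List LR) : List ℕ × List ℕ :=
  w.tail.foldl degStep ([1, 1], [1, 1])

/-- The unreduced degree sequence D(⟨w⟩) = D(a/b) ⊕ D(c/d) of the value of a word. -/
def Dseq (w : List LR) : List ℕ :=
  oplus (degPair w).1 (degPair w).2

/-- Reduction: [k₁,…,k_{q+1}] becomes [k₂,…,k_q, k₁+k_{q+1}]; the last entry is the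
boundary degree and the remaining ones are the inner degrees. -/
def reduce (D : List ℕ) : List ℕ :=
  D.tail.dropLast ++ [D.headD 0 + D.getLastD 0]

/-- The reduced degree sequence of the Haros graph G_{⟨w⟩}. -/
def degSeq (w : List LR) : List ℕ := reduce (Dseq w)

/-- Degree-distribution entropy S of the Haros graph G_{⟨w⟩}:
S = −Σ_k P(k)·ln P(k), summed over the degree values occurring in the reduced
degree sequence, where P(k) = m(k)/q. -/
noncomputable def Sent (w : List LR) : ℝ :=
  -∑ k ∈ (degSeq w).toFinset,
    (((degSeq w).count k : ℝ) / ((value w).2 : ℝ)) *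
      Real.log (((degSeq w).count k : ℝ) / ((value w).2 : ℝ))

/-- Reduced entropy H of the Haros graph G_{⟨w⟩} (with the convention 0·ln 0 = 0,
automatic since Real.log 0 = 0). -/
noncomputable def Hent (w : List LR) : ℝ :=
  let x : ℝ := ((value w).1 : ℝ) / ((value w).2 : ℝ)
  if x ≤ 1 / 2 then
    Sent w + 2 * x * Real.log x + (1 - 2 * x) * Real.log (1 - 2 * x)
  else
    Sent w + 2 * (1 - x) * Real.log (1 - x) + (2 * x - 1) * Real.log (2 * x - 1)

/-! For the current pair (a/b, c/d), track the first entry of D(a/b) plus the last entry of D(c/d).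
A step replaces one of the two lists by D(a/b) ⊕ D(c/d), whose first and last entries are those of
D(a/b) and D(c/d) raised by one; so each of the n − 1 symbols after the initial `L` raises this
sum, which starts at 2, by one, and the final ⊕ giving D(p/q) adds two more. -/

lemma two_le_length_oplus (A B : List ℕ) : 2 ≤ (oplus A B).length := by
  simp only [oplus, List.length_append, List.length_singleton]
  omega

lemma headD_oplus {A : List ℕ} (B : List ℕ) (hA : 2 ≤ A.length) :
    (oplus A B).headD 0 = A.headD 0 + 1 := by
  match A, hA with
  | _ :: _ :: _, _ => simp [oplus]

lemma getLastD_oplus (A B : List ℕ) : (oplus A B).getLastD 0 = B.getLastD 0 + 1 := by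
  rw [oplus, List.getLastD_concat]

def boundarySum (P : List ℕ × List ℕ) : ℕ := P.1.headD 0 + P.2.getLastD 0

lemma two_le_length_degStep_fst {P : List ℕ × List ℕ} (s : LR) (hP : 2 ≤ P.1.length) :
    2 ≤ (degStep P s).1.length := by
  obtain ⟨A, B⟩ := P
  cases s
  · exact hP
  · exact two_le_length_oplus A B

lemma two_le_length_foldl_degStep_fst (l : List LR) {P : List ℕ × List ℕ}
    (hP : 2 ≤ P.1.length) : 2 ≤ (l.foldl degStep P).1.length := by
  induction l generalizing P with
  | nil => exact hP
  | cons s l ih => exact ih (two_le_length_degStep_fst s hP)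

lemma boundarySum_degStep {P : List ℕ × List ℕ} (s : LR) (hP : 2 ≤ P.1.length) :
    boundarySum (degStep P s) = boundarySum P + 1 := by
  obtain ⟨A, B⟩ := P
  cases s
  · simp only [degStep, boundarySum, getLastD_oplus]; ring
  · simp only [degStep, boundarySum, headD_oplus B hP]; ring

lemma boundarySum_foldl_degStep (l : List LR) {P : List ℕ × List ℕ} (hP : 2 ≤ P.1.length) :
    boundarySum (l.foldl degStep P) = boundarySum P + l.length := by
  induction l generalizing P with
  | nil => rfl
  | cons s l ih =>
    rw [List.foldl_cons, ih (two_le_length_degStep_fst s hP), boundarySum_degStep s hP,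
      List.length_cons]
    ring

theorem statement4_general (w : List LR) (hn : 1 ≤ w.length) :
    (Dseq w).headD 0 + (Dseq w).getLastD 0 = w.length + 3 := by
  have hlen : 2 ≤ (degPair w).1.length :=
    two_le_length_foldl_degStep_fst w.tail (P := ([1, 1], [1, 1])) (by simp)
  have hsum : boundarySum (degPair w) = 2 + (w.length - 1) := by
    rw [degPair, boundarySum_foldl_degStep w.tail (by simp), List.length_tail]
    rfl
  rw [boundarySum] at hsum
  rw [Dseq, headD_oplus _ hlen, getLastD_oplus]
  omega

/-- the boundary degree k₁ + k_{q+1} of the Haros graph reached by a path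
of length n equals n + 3. -/
theorem statement4 (w : List LR) (hw : IsFareyWord w) (hn : 1 ≤ w.length) :
    (Dseq w).headD 0 + (Dseq w).getLastD 0 = w.length + 3 :=
  statement4_general w hn
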